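/- Let ρ, T : ℝ³ → ℝ be smooth with ρ(x) > 0 and T(x) > 0 for all x, let K : ℝ³ → M₃(ℝ) be smooth, and assume grad T is compactly supported. For a smooth scalar field e define J_hf e := (1/(ρT)) ( grad(e/ρ) · (K/T) grad(e/ρ) ) + (1/ρ) div( (K/T) grad(e/ρ) ). Then for any smooth e₁, e₂ : ℝ³ → ℝ satisfying e₁/(ρT) = 1 and e₂/(ρT) = 1 everywhere (i.e. e₁ and e₂ lie in the effort space E_s = {e : e/(ρT) = 1}), one has ∫_{ℝ³} e₁ (J_hf e₂) dx = − ∫_{ℝ³} (J_hf e₁) e₂ dx; that is, J_hf is formally skew-symmetric on E_s. -/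

import Mathlib

open MeasureTheory Matrix

noncomputable section

/-- Points of ℝ³. -/
abbrev R3 : Type := Fin 3 → ℝ

/-- Partial derivative `∂f/∂xᵢ` of a scalar field. -/
def pd (i : Fin 3) (f : R3 → ℝ) (x : R3) : ℝ := fderiv ℝ f x (Pi.single i 1)

/-- Gradient of a scalar field. -/
def grad (f : R3 → ℝ) (x : R3) : R3 := fun i => pd i f x

/-- Divergence of a vector field. -/
def vdiv (u : R3 → R3) (x : R3) : ℝ := ∑ i, pd i (fun y => u y i) x

/-- Jacobian matrix `(Grad u)ᵢⱼ = ∂uᵢ/∂xⱼ` of a vector field. -/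
def vGrad (u : R3 → R3) (x : R3) : Matrix (Fin 3) (Fin 3) ℝ :=
  Matrix.of fun i j => pd j (fun y => u y i) x

/-- Divergence `(Div A)ⱼ = ∑ᵢ ∂Aᵢⱼ/∂xᵢ` of a matrix field. -/
def mDiv (A : R3 → Matrix (Fin 3) (Fin 3) ℝ) (x : R3) : R3 :=
  fun j => ∑ i, pd i (fun y => A y i j) x

/-- Frobenius inner product `A : B = ∑ᵢⱼ Aᵢⱼ Bᵢⱼ`. -/
def frob (A B : Matrix (Fin 3) (Fin 3) ℝ) : ℝ := ∑ i, ∑ j, A i j * B i j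

/-- Curl of a vector field. -/
def curl (u : R3 → R3) (x : R3) : R3 :=
  ![pd 1 (fun y => u y 2) x - pd 2 (fun y => u y 1) x,
    pd 2 (fun y => u y 0) x - pd 0 (fun y => u y 2) x,
    pd 0 (fun y => u y 1) x - pd 1 (fun y => u y 0) x]

/-- Cross product on ℝ³. -/
def cross (u v : R3) : R3 :=
  ![u 1 * v 2 - u 2 * v 1, u 2 * v 0 - u 0 * v 2, u 0 * v 1 - u 1 * v 0]

/-- The heat-flux operator `J_hf e = (1/(ρT)) (grad(e/ρ) · (K/T) grad(e/ρ)) + (1/ρ) div((K/T) grad(e/ρ))`. -/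
def Jhf (ρ T : R3 → ℝ) (K : R3 → Matrix (Fin 3) (Fin 3) ℝ) (e : R3 → ℝ) (x : R3) : ℝ :=
  (1 / (ρ x * T x)) *
      (grad (fun y => e y / ρ y) x ⬝ᵥ (((1 / T x) • K x) *ᵥ grad (fun y => e y / ρ y) x))
    + (1 / ρ x) * vdiv (fun y => ((1 / T y) • K y) *ᵥ grad (fun z => e z / ρ z) y) x

lemma contDiff_pd (i : Fin 3) {f : R3 → ℝ} (hf : ContDiff ℝ (⊤ : ℕ∞) f) :
    ContDiff ℝ (⊤ : ℕ∞) (pd i f) :=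
  (hf.fderiv_right (by simp)).clm_apply contDiff_const

lemma pd_hasCompactSupport (i : Fin 3) {f : R3 → ℝ} (hs : HasCompactSupport f) :
    HasCompactSupport (pd i f) :=
  (hs.fderiv (𝕜 := ℝ)).comp_left (g := fun L : R3 →L[ℝ] ℝ => L (Pi.single i 1)) (by simp)

lemma integral_pd_eq_zero (i : Fin 3) {f : R3 → ℝ} (hf : ContDiff ℝ (⊤ : ℕ∞) f)
    (hs : HasCompactSupport f) : ∫ x, pd i f x = 0 := by
  have h := integral_mul_fderiv_eq_neg_fderiv_mul_of_integrable
    (μ := (volume : Measure R3)) (f := fun _ => (1:ℝ)) (g := f) (v := Pi.single i 1)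
    ?_ ?_ ?_ (fun x _ => differentiableAt_const 1) (fun x _ => hf.differentiable (by simp) x)
  · simpa [pd, fderiv_fun_const] using h
  · simp [fderiv_fun_const]
  · simp only [one_mul]; exact ((contDiff_pd i hf).continuous.integrable_of_hasCompactSupport
      (pd_hasCompactSupport i hs))
  · simpa using hf.continuous.integrable_of_hasCompactSupport hs

lemma integral_vdiv_eq_zero {u : R3 → R3} (hu : ∀ i, ContDiff ℝ (⊤ : ℕ∞) fun y => u y i)
    (hs : ∀ i, HasCompactSupport fun y => u y i) : ∫ x, vdiv u x = 0 := by
  have hint : ∀ i : Fin 3, Integrable (fun x => pd i (fun y => u y i) x) volume := fun i =>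
    (contDiff_pd i (hu i)).continuous.integrable_of_hasCompactSupport
      (pd_hasCompactSupport i (hs i))
  simp only [vdiv]
  rw [integral_finset_sum _ fun i _ => hint i]
  exact Finset.sum_eq_zero fun i _ => integral_pd_eq_zero i (hu i) (hs i)

/-- Lemma 3 of the paper (zero-boundary form): `J_hf` is formally skew-symmetric on the
effort space `E_s = {e : e/(ρT) = 1}`. -/
theorem stmt2 (ρ T : R3 → ℝ) (K : R3 → Matrix (Fin 3) (Fin 3) ℝ)
    (hρ : ContDiff ℝ (⊤ : ℕ∞) ρ) (hT : ContDiff ℝ (⊤ : ℕ∞) T)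
    (hρpos : ∀ x, 0 < ρ x) (hTpos : ∀ x, 0 < T x)
    (hK : ∀ i j, ContDiff ℝ (⊤ : ℕ∞) fun x => K x i j)
    (hsupp : HasCompactSupport (grad T))
    (e₁ e₂ : R3 → ℝ) (he₁ : ContDiff ℝ (⊤ : ℕ∞) e₁) (he₂ : ContDiff ℝ (⊤ : ℕ∞) e₂)
    (he₁E : ∀ x, e₁ x / (ρ x * T x) = 1) (he₂E : ∀ x, e₂ x / (ρ x * T x) = 1) :
    ∫ x, e₁ x * Jhf ρ T K e₂ x = - ∫ x, Jhf ρ T K e₁ x * e₂ x := by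
  have hρT : ∀ x, ρ x * T x ≠ 0 := fun x => (mul_pos (hρpos x) (hTpos x)).ne'
  have hE1 : ∀ x, e₁ x = ρ x * T x := fun x => (div_eq_one_iff_eq (hρT x)).mp (he₁E x)
  have hE2 : ∀ x, e₂ x = ρ x * T x := fun x => (div_eq_one_iff_eq (hρT x)).mp (he₂E x)
  set u : R3 → R3 := fun y => ((1 / T y) • K y) *ᵥ grad T y with hu_def
  have hquot : ∀ e : R3 → ℝ, (∀ x, e x = ρ x * T x) → (fun y => e y / ρ y) = T := by
    intro e he
    funext y
    rw [he y]
    field_simp [(hρpos y).ne']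
  -- component smoothness of u
  have hui : ∀ i, ContDiff ℝ (⊤ : ℕ∞) fun y => u y i := by
    intro i
    have : (fun y => u y i) = fun y => ∑ j, 1 / T y * K y i j * pd j T y := by
      funext y
      simp [hu_def, Matrix.mulVec, dotProduct, grad, Matrix.smul_apply, smul_eq_mul, mul_assoc]
    rw [this]
    exact ContDiff.sum fun j _ =>
      ((contDiff_const.div hT fun y => (hTpos y).ne').mul (hK i j)).mul (contDiff_pd j hT)
  -- the compactly supported field F = T • u
  set F : R3 → R3 := fun y i => T y * u y i with hF_def
  have hFi : ∀ i, ContDiff ℝ (⊤ : ℕ∞) fun y => F y i := fun i => hT.mul (hui i)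
  have hFs : ∀ i, HasCompactSupport fun y => F y i := by
    intro i
    apply hsupp.mono
    intro y hy
    simp only [Function.mem_support, hF_def, hu_def] at hy ⊢
    intro h0
    apply hy
    rw [h0, Matrix.mulVec_zero]
    simp
  -- the common value of J_hf on the effort space
  have keyJ : ∀ e : R3 → ℝ, (∀ x, e x = ρ x * T x) →
      ∀ x, Jhf ρ T K e x = 1 / (ρ x * T x) * (grad T x ⬝ᵥ u x) + 1 / ρ x * vdiv u x := by
    intro e he x
    rw [Jhf, hquot e he]
  -- ρT * Jhf e = vdiv F
  have key : ∀ x, (ρ x * T x) * (1 / (ρ x * T x) * (grad T x ⬝ᵥ u x) + 1 / ρ x * vdiv u x)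
      = vdiv F x := by
    intro x
    have hvF : vdiv F x = grad T x ⬝ᵥ u x + T x * vdiv u x := by
      have hpd : ∀ i : Fin 3, pd i (fun y => F y i) x
          = pd i T x * u x i + T x * pd i (fun y => u y i) x := by
        intro i
        have h := fderiv_fun_mul (𝕜 := ℝ) (x := x)
          ((hT.differentiable (by simp)) x) (((hui i).differentiable (by simp)) x)
        simp only [pd, hF_def]
        rw [h]
        simp only [ContinuousLinearMap.add_apply, ContinuousLinearMap.smul_apply, smul_eq_mul]; ring
      simp only [vdiv, hpd, Finset.sum_add_distrib, ← Finset.mul_sum, dotProduct, grad]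
    rw [hvF]
    field_simp [(hρpos x).ne', (hTpos x).ne']
  have hI : ∫ x, vdiv F x = 0 := integral_vdiv_eq_zero hFi hFs
  have h1 : ∀ x, e₁ x * Jhf ρ T K e₂ x = vdiv F x := by
    intro x
    rw [keyJ e₂ hE2 x, hE1 x, key x]
  have h2 : ∀ x, Jhf ρ T K e₁ x * e₂ x = vdiv F x := by
    intro x
    rw [keyJ e₁ hE1 x, hE2 x, mul_comm, key x]
  simp_rw [h1, h2, hI, neg_zero]
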